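/- arXiv:1302.5915 — 4 statements merged into one kernel-verified Lean document; each statement's English description precedes it below -/
import Mathlib

section
/- Two residually finite groups are abstractly commensurable if and only if they are commensurable up to finite kernels. -/
universe u

/-- A bundled group. -/
structure GroupObj : Type (u + 1) where
  carrier : Type u
  [grp : Group carrier]

attribute [instance] GroupObj.grp

/-- A group is residually finite if the intersection of all its finite-index
subgroups is trivial. -/
def ResiduallyFinite (Γ : Type u) [Group Γ] : Prop :=
  (⨅ (H : Subgroup Γ) (_ : H.FiniteIndex), H) = ⊥

/-- Two groups are abstractly commensurable if they contain isomorphic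
finite-index subgroups. -/
def AbstractlyCommensurable (G H : GroupObj.{u}) : Prop :=
  ∃ (A : Subgroup G.carrier) (B : Subgroup H.carrier),
    A.FiniteIndex ∧ B.FiniteIndex ∧ Nonempty (↥A ≃* ↥B)

/-- `G ∼ H` if there is a homomorphism `G → H` with finite kernel and
finite-index image. -/
def FinKerRel (G H : GroupObj.{u}) : Prop :=
  ∃ f : G.carrier →* H.carrier,
    (f.ker : Set G.carrier).Finite ∧ f.range.FiniteIndex

/-- Commensurability up to finite kernels: the equivalence relation generated
by `FinKerRel`. -/
def CommensurableUpToFiniteKernels (G H : GroupObj.{u}) : Prop :=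
  Relation.EqvGen FinKerRel G H

/-!
Call a homomorphism with finite kernel and finite-index image an almost isomorphism. Since
almost isomorphisms compose and are stable under pullback, the equivalence relation they generate
is "there is a span `G ← P → H` of almost isomorphisms"; an isomorphism `A ≅ B` of finite-index
subgroups is such a span with `P = A`. Conversely, given a span `f : P → G`, `g : P → H`,
residual finiteness of `H` separates the finitely many elements of `g (ker f)` from `1` by a
finite-index subgroup, whose preimage `K₁` satisfies `K₁ ⊓ ker f ≤ ker g`. With the symmetric
`K₂`, `f` and `g` have the same kernel on `K = K₁ ⊓ K₂`, so `f K ≅ K ⧸ ker ≅ g K`.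
-/

open Function

namespace Subgroup

variable {A B : Type*} [Group A] [Group B]

theorem finiteIndex_comap (K : Subgroup B) [K.FiniteIndex] (f : A →* B) :
    (K.comap f).FiniteIndex := by
  have := K.isFiniteRelIndex_of_finiteIndex (K := f.range)
  exact ⟨by rw [index_comap]; exact relIndex_ne_zero⟩

theorem finiteIndex_map (K : Subgroup A) [K.FiniteIndex] {f : A →* B} [f.range.FiniteIndex] :
    (K.map f).FiniteIndex where
  index_ne_zero := by
    rw [index_map]
    exact mul_ne_zero (finiteIndex_of_le le_sup_left).index_ne_zero FiniteIndex.index_ne_zero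

end Subgroup

namespace MonoidHom

variable {A B C : Type*} [Group A] [Group B] [Group C]

structure IsAlmostIso (f : A →* B) : Prop where
  finite_ker : (f.ker : Set A).Finite
  finiteIndex_range : f.range.FiniteIndex

theorem finite_preimage_of_finite_ker {f : A →* B} (hf : (f.ker : Set A).Finite) {s : Set B}
    (hs : s.Finite) : (f ⁻¹' s).Finite := by
  refine hs.preimage' fun b _ => ?_
  rcases (f ⁻¹' {b}).eq_empty_or_nonempty with h | ⟨a, ha⟩
  · simp [h]
  · refine (hf.preimage (mul_right_injective a⁻¹).injOn).subset fun x (hx : f x = b) => ?_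
    change f (a⁻¹ * x) = 1
    rw [map_mul, map_inv, hx, show f a = b from ha, inv_mul_cancel]

theorem isAlmostIso_of_injective {f : A →* B} (hf : Injective f) (hr : f.range.FiniteIndex) :
    f.IsAlmostIso :=
  ⟨by simp [(ker_eq_bot_iff f).2 hf], hr⟩

theorem isAlmostIso_of_bijective {f : A →* B} (hf : Bijective f) : f.IsAlmostIso :=
  isAlmostIso_of_injective hf.1 (by rw [range_eq_top_of_surjective f hf.2]; infer_instance)

theorem isAlmostIso_id : (MonoidHom.id A).IsAlmostIso :=
  isAlmostIso_of_bijective bijective_id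

theorem IsAlmostIso.comp {g : B →* C} {f : A →* B} (hg : g.IsAlmostIso) (hf : f.IsAlmostIso) :
    (g.comp f).IsAlmostIso where
  finite_ker := by
    rw [← comap_ker]
    exact finite_preimage_of_finite_ker hf.finite_ker hg.finite_ker
  finiteIndex_range := by
    have := hf.finiteIndex_range
    have := hg.finiteIndex_range
    rw [range_comp]
    exact f.range.finiteIndex_map

def pullback (f : A →* C) (g : B →* C) : Subgroup (A × B) :=
  (f.comp (fst A B)).eqLocus (g.comp (snd A B))

theorem mem_pullback {f : A →* C} {g : B →* C} {x : A × B} :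
    x ∈ pullback f g ↔ f x.1 = g x.2 :=
  Iff.rfl

theorem IsAlmostIso.pullback_fst {g : B →* C} (hg : g.IsAlmostIso) (f : A →* C) :
    ((fst A B).comp (pullback f g).subtype).IsAlmostIso where
  finite_ker := by
    refine Set.Finite.of_injOn (f := fun z : pullback f g => (z : A × B).2) (fun z hz => ?_)
      (fun z hz w hw h => ?_) hg.finite_ker
    · have h1 : (z : A × B).1 = 1 := hz
      have h2 := mem_pullback.1 z.2
      rw [h1, map_one] at h2
      exact h2.symm
    · have h1 : (z : A × B).1 = 1 := hz
      have h2 : (w : A × B).1 = 1 := hw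
      exact Subtype.ext (Prod.ext (h1.trans h2.symm) h)
  finiteIndex_range := by
    have := hg.finiteIndex_range
    have := g.range.finiteIndex_comap f
    refine Subgroup.finiteIndex_of_le (H := g.range.comap f) fun a ⟨b, hb⟩ => ?_
    exact ⟨⟨(a, b), hb.symm⟩, rfl⟩

theorem IsAlmostIso.pullback_snd {f : A →* C} (hf : f.IsAlmostIso) (g : B →* C) :
    ((snd A B).comp (pullback f g).subtype).IsAlmostIso where
  finite_ker := by
    refine Set.Finite.of_injOn (f := fun z : pullback f g => (z : A × B).1) (fun z hz => ?_)
      (fun z hz w hw h => ?_) hf.finite_ker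
    · have h1 : (z : A × B).2 = 1 := hz
      have h2 := mem_pullback.1 z.2
      rw [h1, map_one] at h2
      exact h2
    · have h1 : (z : A × B).2 = 1 := hz
      have h2 : (w : A × B).2 = 1 := hw
      exact Subtype.ext (Prod.ext h (h1.trans h2.symm))
  finiteIndex_range := by
    have := hf.finiteIndex_range
    have := f.range.finiteIndex_comap g
    refine Subgroup.finiteIndex_of_le (H := f.range.comap g) fun b ⟨a, ha⟩ => ?_
    exact ⟨⟨(a, b), ha⟩, rfl⟩

end MonoidHom

theorem Subgroup.isAlmostIso_subtype {A : Type*} [Group A] {K : Subgroup A} (hK : K.FiniteIndex) :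
    K.subtype.IsAlmostIso :=
  MonoidHom.isAlmostIso_of_injective K.subtype_injective (by rwa [K.range_subtype])

theorem finKerRel_iff {G H : GroupObj.{u}} :
    FinKerRel G H ↔ ∃ f : G.carrier →* H.carrier, f.IsAlmostIso :=
  ⟨fun ⟨f, hk, hr⟩ => ⟨f, hk, hr⟩, fun ⟨f, hf⟩ => ⟨f, hf.1, hf.2⟩⟩

def FinKerSpan (G H : GroupObj.{u}) : Prop :=
  ∃ (P : GroupObj.{u}) (f : P.carrier →* G.carrier) (g : P.carrier →* H.carrier),
    f.IsAlmostIso ∧ g.IsAlmostIso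

namespace FinKerSpan

theorem of_isAlmostIso {G H : GroupObj.{u}} {f : G.carrier →* H.carrier} (hf : f.IsAlmostIso) :
    FinKerSpan G H :=
  ⟨G, .id _, f, MonoidHom.isAlmostIso_id, hf⟩

theorem refl (G : GroupObj.{u}) : FinKerSpan G G :=
  of_isAlmostIso MonoidHom.isAlmostIso_id

theorem symm {G H : GroupObj.{u}} : FinKerSpan G H → FinKerSpan H G
  | ⟨P, f, g, hf, hg⟩ => ⟨P, g, f, hg, hf⟩

theorem trans {G H K : GroupObj.{u}} : FinKerSpan G H → FinKerSpan H K → FinKerSpan G K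
  | ⟨_, f, g, hf, hg⟩, ⟨_, f', g', hf', hg'⟩ =>
    ⟨⟨MonoidHom.pullback g f'⟩,
      f.comp ((MonoidHom.fst _ _).comp (MonoidHom.pullback g f').subtype),
      g'.comp ((MonoidHom.snd _ _).comp (MonoidHom.pullback g f').subtype),
      hf.comp (hf'.pullback_fst g), hg'.comp (hg.pullback_snd f')⟩

end FinKerSpan

theorem commensurableUpToFiniteKernels_iff_finKerSpan {G H : GroupObj.{u}} :
    CommensurableUpToFiniteKernels G H ↔ FinKerSpan G H := by
  constructor
  · intro h
    induction h with
    | rel _ _ h =>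
      obtain ⟨f, hf⟩ := finKerRel_iff.1 h
      exact .of_isAlmostIso hf
    | refl G => exact .refl G
    | symm _ _ _ ih => exact ih.symm
    | trans _ _ _ _ _ ih₁ ih₂ => exact ih₁.trans ih₂
  · rintro ⟨P, f, g, hf, hg⟩
    exact .trans _ _ _ (.symm _ _ (.rel _ _ (finKerRel_iff.2 ⟨f, hf⟩)))
      (.rel _ _ (finKerRel_iff.2 ⟨g, hg⟩))

theorem AbstractlyCommensurable.finKerSpan {G H : GroupObj.{u}} :
    AbstractlyCommensurable G H → FinKerSpan G H
  | ⟨A, B, hA, hB, ⟨e⟩⟩ =>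
    ⟨⟨A⟩, A.subtype, B.subtype.comp e, A.isAlmostIso_subtype hA,
      (B.isAlmostIso_subtype hB).comp (MonoidHom.isAlmostIso_of_bijective e.bijective)⟩

namespace ResiduallyFinite

variable {Γ : Type u} [Group Γ]

theorem eq_one_of_forall_mem (hΓ : ResiduallyFinite Γ) {x : Γ}
    (hx : ∀ K : Subgroup Γ, K.FiniteIndex → x ∈ K) : x = 1 := by
  have : x ∈ ⨅ (K : Subgroup Γ) (_ : K.FiniteIndex), K :=
    Subgroup.mem_iInf.2 fun K => Subgroup.mem_iInf.2 (hx K)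
  rwa [hΓ, Subgroup.mem_bot] at this

theorem exists_finiteIndex_inter_subset_one (hΓ : ResiduallyFinite Γ) {S : Set Γ}
    (hS : S.Finite) : ∃ L : Subgroup Γ, L.FiniteIndex ∧ (L : Set Γ) ∩ S ⊆ {1} := by
  have hsep (x : S) : ∃ K : Subgroup Γ, K.FiniteIndex ∧ ((x : Γ) ∈ K → (x : Γ) = 1) := by
    by_cases hx : ∀ K : Subgroup Γ, K.FiniteIndex → (x : Γ) ∈ K
    · exact ⟨⊤, inferInstance, fun _ => hΓ.eq_one_of_forall_mem hx⟩
    · obtain ⟨K, hK, hxK⟩ := not_forall₂.1 hx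
      exact ⟨K, hK, fun h => absurd h hxK⟩
  choose K hK hxK using hsep
  have := hS.to_subtype
  exact ⟨⨅ x, K x, Subgroup.finiteIndex_iInf hK,
    fun x ⟨hxL, hxS⟩ => hxK ⟨x, hxS⟩ (Subgroup.mem_iInf.1 hxL _)⟩

theorem exists_finiteIndex_inf_ker_le (hΓ : ResiduallyFinite Γ) {P G : Type*}
    [Group P] [Group G] {f : P →* G} (hf : (f.ker : Set P).Finite) (g : P →* Γ) :
    ∃ K : Subgroup P, K.FiniteIndex ∧ K ⊓ f.ker ≤ g.ker := by
  obtain ⟨L, hL, hLS⟩ := hΓ.exists_finiteIndex_inter_subset_one (hf.image g)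
  exact ⟨L.comap g, L.finiteIndex_comap g, fun x ⟨hxL, hfx⟩ => hLS ⟨hxL, x, hfx, rfl⟩⟩

end ResiduallyFinite

theorem FinKerSpan.abstractlyCommensurable {G H : GroupObj.{u}}
    (hG : ResiduallyFinite G.carrier) (hH : ResiduallyFinite H.carrier) :
    FinKerSpan G H → AbstractlyCommensurable G H := by
  rintro ⟨P, f, g, hf, hg⟩
  obtain ⟨K₁, hK₁, hfg⟩ := hH.exists_finiteIndex_inf_ker_le hf.finite_ker g
  obtain ⟨K₂, hK₂, hgf⟩ := hG.exists_finiteIndex_inf_ker_le hg.finite_ker f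
  set K := K₁ ⊓ K₂
  set φ := f.comp K.subtype
  set ψ := g.comp K.subtype
  have hker : φ.ker = ψ.ker := by
    ext x
    exact ⟨fun h => hfg ⟨x.2.1, h⟩, fun h => hgf ⟨x.2.2, h⟩⟩
  have := hf.finiteIndex_range
  have := hg.finiteIndex_range
  refine ⟨φ.range, ψ.range, ?_, ?_, ⟨(QuotientGroup.quotientKerEquivRange φ).symm.trans
    ((QuotientGroup.quotientMulEquivOfEq hker).trans (QuotientGroup.quotientKerEquivRange ψ))⟩⟩
  all_goals
    rw [MonoidHom.range_comp, K.range_subtype]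
    exact K.finiteIndex_map

/-- Two residually finite groups are abstractly commensurable if and only if
they are commensurable up to finite kernels. -/
theorem abstractlyCommensurable_iff_commensurableUpToFiniteKernels
    (G H : GroupObj.{u})
    (hG : ResiduallyFinite G.carrier) (hH : ResiduallyFinite H.carrier) :
    AbstractlyCommensurable G H ↔ CommensurableUpToFiniteKernels G H := by
  rw [commensurableUpToFiniteKernels_iff_finKerSpan]
  exact ⟨AbstractlyCommensurable.finKerSpan, FinKerSpan.abstractlyCommensurable hG hH⟩
end

section
/- Free groups have the unique root property: in a free group, x^k = y^k with k ≠ 0 implies x = y. -/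
/-- Free groups have the unique root property: `x^k = y^k` with `k ≠ 0`
implies `x = y`. -/
theorem freeGroup_unique_root (α : Type*) (x y : FreeGroup α) (k : ℤ)
    (hk : k ≠ 0) (h : x ^ k = y ^ k) : x = y :=
  zpow_left_injective hk h
end

section
/- Let Γ be a strongly polycyclic group and Γ₁ ≤ Γ a finite-index subgroup. Then Fitt(Γ₁) = Fitt(Γ) ∩ Γ₁. -/
/-- A subnormal series of `Γ` of length `n` with all successive quotients cyclic. -/
structure PolycyclicSeries (Γ : Type*) [Group Γ] (n : ℕ) where
  s : Fin (n + 1) → Subgroup Γ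
  bot : s 0 = ⊥
  top : s (Fin.last n) = ⊤
  normal : ∀ i : Fin n, ((s i.castSucc).subgroupOf (s i.succ)).Normal
  cyclic : ∀ i : Fin n,
    letI := normal i
    IsCyclic (↥(s i.succ) ⧸ (s i.castSucc).subgroupOf (s i.succ))

/-- A group is polycyclic if it admits a subnormal series with cyclic
successive quotients. -/
def IsPolycyclic (Γ : Type*) [Group Γ] : Prop :=
  ∃ n : ℕ, Nonempty (PolycyclicSeries Γ n)

/-- A group is strongly polycyclic if it admits a subnormal series with all
successive quotients infinite cyclic. -/
def IsStronglyPolycyclic (Γ : Type*) [Group Γ] : Prop :=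
  ∃ (n : ℕ) (S : PolycyclicSeries Γ n), ∀ i : Fin n,
    Infinite (↥(S.s i.succ) ⧸ (S.s i.castSucc).subgroupOf (S.s i.succ))

/-- The number of infinite cyclic successive quotients of a polycyclic series. -/
noncomputable def PolycyclicSeries.hirsch {Γ : Type*} [Group Γ] {n : ℕ}
    (S : PolycyclicSeries Γ n) : ℕ :=
  Nat.card {i : Fin n //
    Infinite (↥(S.s i.succ) ⧸ (S.s i.castSucc).subgroupOf (S.s i.succ))}

/-- The Fitting subgroup: the subgroup generated by all normal nilpotent
subgroups. -/
def Fitting (Γ : Type*) [Group Γ] : Subgroup Γ :=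
  ⨆ (N : Subgroup Γ) (_ : N.Normal ∧ Group.IsNilpotent ↥N), N

/-
A nilpotent subgroup `N` whose normalizer has finite index lies in `Fitt(Γ)`. Let `T` be the normal
core of that normalizer and `k = [Γ : T]`. The finitely many conjugates of `N ⊓ T` are normal
nilpotent subgroups of `T`, so by Fitting's theorem they generate a normal nilpotent subgroup `M`
of `Γ`, which contains `g ^ k` for all `g ∈ N`. Since `Γ` is strongly polycyclic, its isolated
derived series is a finite normal series with torsion-free abelian factors; refining it by
commutators with `M` and isolating, `M` centralizes every factor. On each factor, `g ∈ N` acts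
unipotently (as `N` is nilpotent and normalized by `T`, which contains all `k`-th powers) while
`g ^ k` acts trivially, and on a torsion-free abelian group this forces `g` to act trivially. Hence
`N` lies in the stabilizer of the series, a normal nilpotent subgroup.

Conversely, Fitting's theorem makes the normal nilpotent subgroups a directed family, so every
element of `Fitt(Γ) ⊓ Γ₁` lies in some normal nilpotent `N`, and `N ⊓ Γ₁` is normal nilpotent
in `Γ₁`. Fitting's theorem itself holds because the stabilizer of a normal series from `⊤` to `⊥`
is nilpotent, and two such series combine as `m ↦ ⨆_{i + j = m} E i ⊓ F j`.
-/

open Subgroup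
open scoped commutatorElement

namespace Subgroup

variable {G : Type*} [Group G]

theorem commutatorElement_mem_iff_commute {R : Subgroup G} [R.Normal] {x y : G} :
    ⁅x, y⁆ ∈ R ↔ Commute (x : G ⧸ R) y := by
  rw [← QuotientGroup.eq_one_iff, ← commutatorElement_eq_one_iff_commute]
  exact Iff.of_eq (congrArg (· = 1) (map_commutatorElement (QuotientGroup.mk' R) x y))

theorem commutatorElement_mem_left {N : Subgroup G} [N.Normal] {x : G} (hx : x ∈ N) (g : G) :
    ⁅x, g⁆ ∈ N :=
  commutator_le_left N ⊤ (commutator_mem_commutator hx (mem_top g))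

theorem commutator_le_iff_le_comap_centralizer {X H R : Subgroup G} [R.Normal] :
    ⁅X, H⁆ ≤ R ↔ X ≤ (centralizer (H.map (QuotientGroup.mk' R))).comap (QuotientGroup.mk' R) := by
  refine ⟨fun h x hx => ?_, fun h => commutator_le.mpr fun x hx y hy => ?_⟩
  · rw [mem_comap, mem_centralizer_iff]
    rintro _ ⟨y, hy, rfl⟩
    exact (commutatorElement_mem_iff_commute.mp (commutator_le.mp h x hx y hy)).symm.eq
  · exact commutatorElement_mem_iff_commute.mpr
      (Commute.symm (mem_centralizer_iff.mp (h hx) _ ⟨y, hy, rfl⟩))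

theorem commutator_iSup_le {ι : Sort*} {X : ι → Subgroup G} {H R : Subgroup G} [R.Normal]
    (h : ∀ i, ⁅X i, H⁆ ≤ R) : ⁅⨆ i, X i, H⁆ ≤ R := by
  simp only [commutator_le_iff_le_comap_centralizer] at h ⊢
  exact iSup_le h

theorem commutator_sup_le {X Y H R : Subgroup G} [R.Normal] (hX : ⁅X, H⁆ ≤ R)
    (hY : ⁅Y, H⁆ ≤ R) : ⁅X ⊔ Y, H⁆ ≤ R := by
  rw [commutator_le_iff_le_comap_centralizer] at hX hY ⊢
  exact sup_le hX hY

def iteratedCommutator (B H : Subgroup G) : ℕ → Subgroup G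
  | 0 => B
  | n + 1 => ⁅iteratedCommutator B H n, H⁆

section IteratedCommutator

variable (B H : Subgroup G)

theorem iteratedCommutator_succ (n : ℕ) :
    iteratedCommutator B H (n + 1) = ⁅iteratedCommutator B H n, H⁆ := rfl

instance iteratedCommutator_normal [B.Normal] [H.Normal] (n : ℕ) :
    (iteratedCommutator B H n).Normal := by
  induction n with
  | zero => assumption
  | succ n _ => rw [iteratedCommutator_succ]; infer_instance

theorem iteratedCommutator_le_self [B.Normal] [H.Normal] (n : ℕ) :
    iteratedCommutator B H n ≤ B := by
  induction n with
  | zero => exact le_rfl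
  | succ n ih => exact (commutator_le_left _ _).trans ih

variable {B H}

theorem iteratedCommutator_succ_le_lowerCentralSeries (hBH : ⁅B, H⁆ ≤ H) (n : ℕ) :
    iteratedCommutator B H (n + 1) ≤ H.lowerCentralSeries n := by
  induction n with
  | zero => exact hBH
  | succ n ih => exact commutator_mono ih le_rfl

theorem exists_iteratedCommutator_eq_bot (hBH : ⁅B, H⁆ ≤ H) (hH : Group.IsNilpotent H) :
    ∃ a, ∀ n, a ≤ n → iteratedCommutator B H n = ⊥ := by
  obtain ⟨c, hc⟩ := (isNilpotent_iff_lowerCentralSeries H).mp hH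
  refine ⟨c + 1, fun n hn => le_bot_iff.mp ?_⟩
  obtain ⟨m, rfl⟩ : ∃ m, n = m + 1 := ⟨n - 1, by omega⟩
  calc iteratedCommutator B H (m + 1) ≤ H.lowerCentralSeries m :=
        iteratedCommutator_succ_le_lowerCentralSeries hBH m
    _ ≤ H.lowerCentralSeries c := lowerCentralSeries_antitone H (by omega)
    _ = ⊥ := hc

theorem iterate_commutatorElement_mem_iteratedCommutator {g : G} (hg : g ∈ H) {x : G} (hx : x ∈ B)
    (n : ℕ) :
    (⁅·, g⁆)^[n] x ∈ iteratedCommutator B H n := by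
  induction n with
  | zero => exact hx
  | succ n ih =>
    rw [Function.iterate_succ_apply']
    exact commutator_mem_commutator ih hg

end IteratedCommutator

end Subgroup

section Stabilizer

variable {G : Type*} [Group G]

/-- The elements acting trivially on every factor `E i / E (i + 1)`. -/
def seriesStabilizer (E : ℕ → Subgroup G) [∀ i, (E i).Normal] : Subgroup G :=
  ⨅ i, (centralizer ((E i).map (QuotientGroup.mk' (E (i + 1))))).comap
    (QuotientGroup.mk' (E (i + 1)))

variable {E : ℕ → Subgroup G} [hE : ∀ i, (E i).Normal]

theorem le_seriesStabilizer_iff {H : Subgroup G} :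
    H ≤ seriesStabilizer E ↔ ∀ i, ⁅E i, H⁆ ≤ E (i + 1) := by
  simp only [seriesStabilizer, le_iInf_iff, commutator_comm (E _) H,
    commutator_le_iff_le_comap_centralizer]

instance seriesStabilizer_normal : (seriesStabilizer E).Normal :=
  normal_iInf_normal fun i =>
    have := (hE i).map _ (QuotientGroup.mk'_surjective (E (i + 1)))
    inferInstance

theorem lowerCentralSeries_seriesStabilizer_le (h0 : E 0 = ⊤) (n : ℕ) :
    (seriesStabilizer E).lowerCentralSeries n ≤ E n := by
  induction n with
  | zero => simp [h0]
  | succ n ih => exact (commutator_mono ih le_rfl).trans (le_seriesStabilizer_iff.mp le_rfl n)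

theorem isNilpotent_seriesStabilizer (h0 : E 0 = ⊤) {n : ℕ} (hn : E n = ⊥) :
    Group.IsNilpotent (seriesStabilizer E) :=
  isNilpotent_of_lowerCentralSeries_eq_bot
    (le_bot_iff.mp (hn ▸ lowerCentralSeries_seriesStabilizer_le h0 n))

end Stabilizer

section SeriesConv

variable {G : Type*} [Group G]

def seriesConv (E F : ℕ → Subgroup G) (m : ℕ) : Subgroup G :=
  ⨆ (i) (j) (_ : i + j = m), E i ⊓ F j

variable {E F : ℕ → Subgroup G}

theorem inf_le_seriesConv (i j : ℕ) : E i ⊓ F j ≤ seriesConv E F (i + j) :=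
  le_iSup₂_of_le i j (le_iSup_of_le rfl le_rfl)

theorem seriesConv_zero (hE : E 0 = ⊤) (hF : F 0 = ⊤) : seriesConv E F 0 = ⊤ :=
  top_le_iff.mp (by simpa [hE, hF] using inf_le_seriesConv (E := E) (F := F) 0 0)

theorem seriesConv_eq_bot {a b : ℕ} (hE : ∀ i, a ≤ i → E i = ⊥) (hF : ∀ j, b ≤ j → F j = ⊥) :
    seriesConv E F (a + b) = ⊥ := by
  refine le_bot_iff.mp (iSup₂_le fun i j => iSup_le fun hij => ?_)
  rcases le_or_gt a i with h | h
  · exact inf_le_left.trans (hE _ h).le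
  · exact inf_le_right.trans (hF _ (by omega)).le

variable [∀ i, (E i).Normal] [∀ j, (F j).Normal]

instance seriesConv_normal (m : ℕ) : (seriesConv E F m).Normal := by
  unfold seriesConv; infer_instance

theorem le_seriesStabilizer_seriesConv {H : Subgroup G}
    (h : ∀ i j, ⁅E i ⊓ F j, H⁆ ≤ seriesConv E F (i + j + 1)) :
    H ≤ seriesStabilizer (seriesConv E F) := by
  refine le_seriesStabilizer_iff.mpr fun m =>
    commutator_iSup_le fun i => commutator_iSup_le fun j => commutator_iSup_le fun hij => ?_
  exact hij ▸ h i j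

theorem seriesStabilizer_le_seriesConv_left :
    seriesStabilizer E ≤ seriesStabilizer (seriesConv E F) :=
  le_seriesStabilizer_seriesConv fun i j => calc
    ⁅E i ⊓ F j, seriesStabilizer E⁆ ≤ E (i + 1) ⊓ F j :=
      le_inf ((commutator_mono inf_le_left le_rfl).trans (le_seriesStabilizer_iff.mp le_rfl i))
        ((commutator_mono inf_le_right le_rfl).trans (commutator_le_left _ _))
    _ ≤ seriesConv E F (i + j + 1) := by
      simpa only [add_right_comm] using inf_le_seriesConv (i + 1) j

theorem seriesStabilizer_le_seriesConv_right :
    seriesStabilizer F ≤ seriesStabilizer (seriesConv E F) :=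
  le_seriesStabilizer_seriesConv fun i j => calc
    ⁅E i ⊓ F j, seriesStabilizer F⁆ ≤ E i ⊓ F (j + 1) :=
      le_inf ((commutator_mono inf_le_left le_rfl).trans (commutator_le_left _ _))
        ((commutator_mono inf_le_right le_rfl).trans (le_seriesStabilizer_iff.mp le_rfl j))
    _ ≤ seriesConv E F (i + j + 1) := inf_le_seriesConv i (j + 1)

end SeriesConv

section FittingSubgroup

variable {G : Type*} [Group G]

theorem isNilpotent_of_le {H K : Subgroup G} (hHK : H ≤ K) (hK : Group.IsNilpotent K) :
    Group.IsNilpotent H := by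
  obtain ⟨n, hn⟩ := (isNilpotent_iff_lowerCentralSeries K).mp hK
  exact isNilpotent_of_lowerCentralSeries_eq_bot
    (le_bot_iff.mp (hn ▸ lowerCentralSeries_mono n hHK : H.lowerCentralSeries n ≤ ⊥))

theorem isNilpotent_sup {H K : Subgroup G} [H.Normal] [K.Normal] (hH : Group.IsNilpotent H)
    (hK : Group.IsNilpotent K) : Group.IsNilpotent (H ⊔ K : Subgroup G) := by
  obtain ⟨a, ha⟩ := exists_iteratedCommutator_eq_bot (commutator_le_right ⊤ H) hH
  obtain ⟨b, hb⟩ := exists_iteratedCommutator_eq_bot (commutator_le_right ⊤ K) hK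
  have hHE : H ≤ seriesStabilizer (iteratedCommutator ⊤ H) :=
    le_seriesStabilizer_iff.mpr fun _ => le_rfl
  have hKE : K ≤ seriesStabilizer (iteratedCommutator ⊤ K) :=
    le_seriesStabilizer_iff.mpr fun _ => le_rfl
  exact isNilpotent_of_le
    (sup_le (hHE.trans seriesStabilizer_le_seriesConv_left)
      (hKE.trans seriesStabilizer_le_seriesConv_right))
    (isNilpotent_seriesStabilizer (seriesConv_zero rfl rfl) (seriesConv_eq_bot ha hb))

theorem isNilpotent_iSup_of_finite {ι : Type*} [Finite ι] {f : ι → Subgroup G}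
    [∀ i, (f i).Normal] (hf : ∀ i, Group.IsNilpotent (f i)) :
    Group.IsNilpotent (⨆ i, f i : Subgroup G) := by
  cases nonempty_fintype ι
  rw [← Finset.sup_univ_eq_iSup]
  refine (Finset.sup_induction (p := fun N : Subgroup G => N.Normal ∧ Group.IsNilpotent N)
    ⟨inferInstance, isNilpotent_of_lowerCentralSeries_eq_bot (n := 0) rfl⟩ ?_
    fun i _ => ⟨inferInstance, hf i⟩).2
  rintro A ⟨hA, hAn⟩ B ⟨hB, hBn⟩
  exact ⟨inferInstance, isNilpotent_sup hAn hBn⟩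

theorem le_fitting {N : Subgroup G} (hN : N.Normal) (hnil : Group.IsNilpotent N) :
    N ≤ Fitting G :=
  le_iSup₂_of_le N ⟨hN, hnil⟩ le_rfl

theorem mem_fitting_iff {x : G} :
    x ∈ Fitting G ↔ ∃ N : Subgroup G, N.Normal ∧ Group.IsNilpotent N ∧ x ∈ N := by
  refine ⟨fun hx => ?_, fun ⟨N, hN, hnil, hxN⟩ => le_fitting hN hnil hxN⟩
  rw [Fitting, iSup_subtype'] at hx
  have : Nonempty {N : Subgroup G // N.Normal ∧ Group.IsNilpotent N} :=
    ⟨⟨⊥, inferInstance, isNilpotent_of_lowerCentralSeries_eq_bot (n := 0) rfl⟩⟩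
  have hdir : Directed (· ≤ ·)
      fun N : {N : Subgroup G // N.Normal ∧ Group.IsNilpotent N} => (N : Subgroup G) := by
    rintro ⟨A, hA, hAn⟩ ⟨B, hB, hBn⟩
    exact ⟨⟨A ⊔ B, inferInstance, isNilpotent_sup hAn hBn⟩, le_sup_left, le_sup_right⟩
  obtain ⟨⟨N, hN, hnil⟩, hxN⟩ := (mem_iSup_of_directed hdir).mp hx
  exact ⟨N, hN, hnil, hxN⟩

end FittingSubgroup

section NilpotentNormalClosure

open Pointwise ConjAct

variable {G : Type*} [Group G] {T X : Subgroup G}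

theorem toConjAct_mul_smul_of_mem_normalizer (g : G) {t : G} (ht : t ∈ normalizer X) :
    toConjAct (g * t) • X = toConjAct g • X := by
  rw [map_mul, mul_smul, conjAct_pointwise_smul_eq_self ht]

theorem le_normalizer_toConjAct_smul [hT : T.Normal] (hTX : T ≤ normalizer X) (g : G) :
    T ≤ normalizer (toConjAct g • X : Subgroup G) := by
  intro t ht
  have hconj : g⁻¹ * t * g ∈ T := by simpa using hT.conj_mem t ht g⁻¹
  rw [← conjAct_pointwise_smul_iff, ← mul_smul, ← map_mul,
    show t * g = g * (g⁻¹ * t * g) by group, toConjAct_mul_smul_of_mem_normalizer g (hTX hconj)]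

theorem exists_normal_isNilpotent_ge_of_finiteIndex [T.Normal] [T.FiniteIndex] (hXT : X ≤ T)
    (hTX : T ≤ normalizer X) (hX : Group.IsNilpotent X) :
    ∃ M : Subgroup G, M.Normal ∧ Group.IsNilpotent M ∧ X ≤ M := by
  set f : G ⧸ T → Subgroup T := fun q => (toConjAct q.out • X).subgroupOf T
  have hconjT : ∀ g : G, toConjAct g • X ≤ T := fun g => by
    simpa [Normal.conjAct] using (pointwise_smul_le_pointwise_smul_iff (a := toConjAct g)).mpr hXT
  have : ∀ q, (f q).Normal := fun q =>
    (normal_subgroupOf_iff_le_normalizer (hconjT _)).mpr (le_normalizer_toConjAct_smul hTX _)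
  have hf : Group.IsNilpotent (⨆ q, f q : Subgroup T) := isNilpotent_iSup_of_finite fun q =>
    (Group.isNilpotent_congr ((subgroupOfEquivOfLe (hconjT _)).trans
      (equivSMul (toConjAct q.out) X).symm)).mpr hX
  set M : Subgroup G := ⨆ g : G, toConjAct g • X
  have hM : M ≤ (⨆ q, f q).map T.subtype := iSup_le fun g => by
    obtain ⟨t, ht⟩ := QuotientGroup.mk_out_eq_mul T g
    rw [← toConjAct_mul_smul_of_mem_normalizer g (hTX t.2), ← ht, Subgroup.map_iSup]
    refine le_iSup_of_le (g : G ⧸ T) ?_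
    rw [subgroupOf_map_subtype]
    exact le_inf le_rfl (hconjT _)
  refine ⟨M, ⟨fun x hx g => ?_⟩, isNilpotent_of_le hM ?_, ?_⟩
  · have hgM : toConjAct g • M ≤ M := by
      refine pointwise_smul_subset_iff.mpr (iSup_le fun h => ?_)
      rw [subset_pointwise_smul_iff, inv_inv, ← mul_smul, ← map_mul]
      exact le_iSup (fun g : G => toConjAct g • X) (g * h)
    simpa [toConjAct_smul] using hgM (smul_mem_pointwise_smul x (toConjAct g) M hx)
  · exact (Group.isNilpotent_congr (equivMapOfInjective _ _ T.subtype_injective)).mp hf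
  · simpa using le_iSup (fun g : G => toConjAct g • X) 1

end NilpotentNormalClosure

section Isolator

variable {G : Type*} [Group G]

structure IsTorsionFreeAbelianFactor (P Q : Subgroup G) : Prop where
  commutator_le : ⁅P, P⁆ ≤ Q
  mem_of_pow_mem : ∀ x ∈ P, ∀ m ≠ 0, x ^ m ∈ Q → x ∈ Q

/-- A closure, so that no hypotheses are needed to define it; when `S` is normal and contains
`⁅P, P⁆` it is just the set of elements of `P` with a nonzero power in `S` (`mem_isolator`). -/
def isolator (P S : Subgroup G) : Subgroup G :=
  closure {x | x ∈ P ∧ ∃ m ≠ 0, x ^ m ∈ S}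

variable {P Q S : Subgroup G}

theorem isolator_le_of_forall (h : ∀ x ∈ P, ∀ m ≠ 0, x ^ m ∈ S → x ∈ Q) : isolator P S ≤ Q :=
  (closure_le Q).mpr fun x ⟨hx, m, hm, hxm⟩ => h x hx m hm hxm

theorem isolator_le_self : isolator P S ≤ P :=
  isolator_le_of_forall fun _ hx _ _ _ => hx

theorem le_isolator (hSP : S ≤ P) : S ≤ isolator P S :=
  fun x hx => subset_closure ⟨hSP hx, 1, one_ne_zero, by rwa [pow_one]⟩

theorem IsTorsionFreeAbelianFactor.isolator_le {B : Subgroup G}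
    (hBQ : IsTorsionFreeAbelianFactor B Q) (hPB : P ≤ B) (hSQ : S ≤ Q) : isolator P S ≤ Q :=
  isolator_le_of_forall fun x hx m hm hxm => hBQ.mem_of_pow_mem x (hPB hx) m hm (hSQ hxm)

variable [S.Normal]

theorem mem_isolator (h : ⁅P, P⁆ ≤ S) {x : G} :
    x ∈ isolator P S ↔ x ∈ P ∧ ∃ m ≠ 0, x ^ m ∈ S := by
  refine ⟨fun hx => ?_, fun hx => subset_closure hx⟩
  induction hx using closure_induction with
  | mem x hx => exact hx
  | one => exact ⟨one_mem P, 1, one_ne_zero, by rw [one_pow]; exact one_mem S⟩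
  | mul x y _ _ hx hy =>
    obtain ⟨hxP, m, hm, hxm⟩ := hx
    obtain ⟨hyP, l, hl, hyl⟩ := hy
    refine ⟨mul_mem hxP hyP, m * l, mul_ne_zero hm hl, ?_⟩
    have hc : Commute (x : G ⧸ S) y :=
      commutatorElement_mem_iff_commute.mp (h (commutator_mem_commutator hxP hyP))
    rw [← QuotientGroup.eq_one_iff] at hxm hyl ⊢
    rw [QuotientGroup.mk_pow, QuotientGroup.mk_mul, hc.mul_pow, pow_mul, ← QuotientGroup.mk_pow,
      hxm, one_pow, one_mul, mul_comm, pow_mul, ← QuotientGroup.mk_pow, hyl, one_pow]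
  | inv x _ hx =>
    obtain ⟨hxP, m, hm, hxm⟩ := hx
    exact ⟨inv_mem hxP, m, hm, by rw [inv_pow]; exact inv_mem hxm⟩

theorem isTorsionFreeAbelianFactor_isolator (h : ⁅P, P⁆ ≤ S) :
    IsTorsionFreeAbelianFactor P (isolator P S) where
  commutator_le x hx := (mem_isolator h).mpr
    ⟨(commutator_le_sup P P).trans (sup_idem P).le hx, 1, one_ne_zero, by rw [pow_one]; exact h hx⟩
  mem_of_pow_mem x hx m hm hxm := by
    obtain ⟨-, l, hl, hxl⟩ := (mem_isolator h).mp hxm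
    exact (mem_isolator h).mpr ⟨hx, m * l, mul_ne_zero hm hl, by rwa [pow_mul]⟩

theorem isolator_normal [hP : P.Normal] (h : ⁅P, P⁆ ≤ S) : (isolator P S).Normal where
  conj_mem x hx g := by
    obtain ⟨hxP, m, hm, hxm⟩ := (mem_isolator h).mp hx
    exact (mem_isolator h).mpr
      ⟨hP.conj_mem x hxP g, m, hm, by rw [conj_pow]; exact Normal.conj_mem ‹_› _ hxm g⟩

end Isolator

section Unipotent

variable {G : Type*} [Group G] {W : Subgroup G} [W.Normal] {g : G}

theorem iterate_commutatorElement_mem {w : G} (hw : w ∈ W) (n : ℕ) : (⁅·, g⁆)^[n] w ∈ W :=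
  Set.MapsTo.iterate (fun _ hx => commutatorElement_mem_left hx g) n hw

theorem commutatorElement_pow_left_of_commute (hWc : ∀ a ∈ W, ∀ b ∈ W, Commute a b) {w : G}
    (hw : w ∈ W) (h : G) (m : ℕ) : ⁅w ^ m, h⁆ = ⁅w, h⁆ ^ m := by
  induction m with
  | zero => simp
  | succ m ih =>
    have hcomm : Commute w ⁅w ^ m, h⁆ := hWc _ hw _ (commutatorElement_mem_left (pow_mem hw m) h)
    rw [pow_succ', commutatorElement_mul_left_eq_conj_mul, hcomm.eq, mul_inv_cancel_right, ih,
      pow_succ]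

theorem iterate_commutatorElement_pow (hWc : ∀ a ∈ W, ∀ b ∈ W, Commute a b) {w : G}
    (hw : w ∈ W) (n k : ℕ) : (⁅·, g⁆)^[n] (w ^ k) = ((⁅·, g⁆)^[n] w) ^ k := by
  induction n generalizing w with
  | zero => rfl
  | succ n ih =>
    simp only [Function.iterate_succ_apply]
    rw [commutatorElement_pow_left_of_commute hWc hw, ih (commutatorElement_mem_left hw g)]

theorem commutatorElement_eq_one_of_unipotent (htf : ∀ w ∈ W, ∀ m ≠ 0, w ^ m = 1 → w = 1)
    {k n : ℕ} (hk : k ≠ 0) (hgk : ∀ w ∈ W, ⁅w, g ^ k⁆ = 1)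
    (hn : ∀ w ∈ W, (⁅·, g⁆)^[n] w = 1) : ∀ w ∈ W, ⁅w, g⁆ = 1 := by
  -- If `d = ⁅b, g⁆` commutes with `g`, then `b g^k b⁻¹ = (d g)^k = d^k g^k`, forcing `d^k = 1`.
  have step : ∀ b ∈ W, ⁅⁅b, g⁆, g⁆ = 1 → ⁅b, g⁆ = 1 := by
    intro b hb hd
    have hdg := commutatorElement_eq_one_iff_commute.mp hd
    have hconj : b * g * b⁻¹ = ⁅b, g⁆ * g := by rw [commutatorElement_def]; group
    have hbk : b * g ^ k * b⁻¹ = g ^ k := by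
      rw [(commutatorElement_eq_one_iff_commute.mp (hgk b hb)).eq, mul_inv_cancel_right]
    rw [← conj_pow, hconj, hdg.mul_pow, mul_eq_right] at hbk
    exact htf _ (iterate_commutatorElement_mem hb 1) k hk hbk
  have descend : ∀ j, (∀ w ∈ W, (⁅·, g⁆)^[j + 1] w = 1) → ∀ w ∈ W, ⁅w, g⁆ = 1 := by
    intro j
    induction j with
    | zero => exact id
    | succ j ih =>
      refine fun h => ih fun w hw => ?_
      rw [Function.iterate_succ_apply']
      refine step _ (iterate_commutatorElement_mem hw j) ?_
      simpa only [Function.iterate_succ_apply'] using h w hw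
  exact descend n fun w hw => by
    rw [Function.iterate_succ_apply]
    exact hn _ (iterate_commutatorElement_mem hw 1)

end Unipotent

section TorsionFreeAbelianFactor

variable {G : Type*} [Group G] {P Q : Subgroup G}

theorem IsTorsionFreeAbelianFactor.commute_map [Q.Normal] (hPQ : IsTorsionFreeAbelianFactor P Q) :
    ∀ a ∈ P.map (QuotientGroup.mk' Q), ∀ b ∈ P.map (QuotientGroup.mk' Q), Commute a b := by
  rintro _ ⟨x, hx, rfl⟩ _ ⟨y, hy, rfl⟩
  exact commutatorElement_mem_iff_commute.mp (hPQ.commutator_le (commutator_mem_commutator hx hy))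

theorem IsTorsionFreeAbelianFactor.mk_commutatorElement_pow [P.Normal] [Q.Normal]
    (hPQ : IsTorsionFreeAbelianFactor P Q) {x : G} (hx : x ∈ P) (g : G) (m : ℕ) :
    QuotientGroup.mk' Q ⁅x ^ m, g⁆ = QuotientGroup.mk' Q (⁅x, g⁆ ^ m) := by
  set π := QuotientGroup.mk' Q
  have : (P.map π).Normal := Normal.map ‹_› π (QuotientGroup.mk'_surjective Q)
  rw [map_commutatorElement, map_pow, map_pow, map_commutatorElement,
    commutatorElement_pow_left_of_commute hPQ.commute_map (mem_map_of_mem π hx)]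

theorem IsTorsionFreeAbelianFactor.commutatorElement_mem [P.Normal] [Q.Normal]
    (hPQ : IsTorsionFreeAbelianFactor P Q) {g : G} {k n : ℕ} (hk : k ≠ 0)
    (hgk : ∀ x ∈ P, ⁅x, g ^ k⁆ ∈ Q) (hn : ∀ x ∈ P, (⁅·, g⁆)^[n] (x ^ k) ∈ Q) :
    ∀ x ∈ P, ⁅x, g⁆ ∈ Q := by
  set π := QuotientGroup.mk' Q
  have : (P.map π).Normal := Normal.map ‹_› π (QuotientGroup.mk'_surjective Q)
  have hπ : ∀ n x, π ((⁅·, g⁆)^[n] x) = (⁅·, π g⁆)^[n] (π x) :=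
    Function.Semiconj.iterate_right (fun x => map_commutatorElement π x g)
  have htf : ∀ w ∈ P.map π, ∀ m ≠ 0, w ^ m = 1 → w = 1 := by
    rintro _ ⟨x, hx, rfl⟩ m hm hxm
    rw [← map_pow, QuotientGroup.mk'_apply, QuotientGroup.eq_one_iff] at hxm
    exact (QuotientGroup.eq_one_iff x).mpr (hPQ.mem_of_pow_mem x hx m hm hxm)
  have hunip : ∀ w ∈ P.map π, (⁅·, π g⁆)^[n] w = 1 := by
    rintro _ ⟨x, hx, rfl⟩
    refine htf _ (iterate_commutatorElement_mem (mem_map_of_mem π hx) n) k hk ?_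
    rw [← iterate_commutatorElement_pow hPQ.commute_map (mem_map_of_mem π hx), ← map_pow, ← hπ]
    exact (QuotientGroup.eq_one_iff _).mpr (hn x hx)
  intro x hx
  rw [← QuotientGroup.eq_one_iff, ← QuotientGroup.mk'_apply, map_commutatorElement]
  refine commutatorElement_eq_one_of_unipotent htf hk ?_ hunip _ (mem_map_of_mem π hx)
  rintro _ ⟨y, hy, rfl⟩
  rw [← map_pow, ← map_commutatorElement]
  exact (QuotientGroup.eq_one_iff _).mpr (hgk y hy)

end TorsionFreeAbelianFactor

section IsolatedDerivedSeries

variable (G : Type*) [Group G]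

def isolatedDerivedSeries : ℕ → Subgroup G
  | 0 => ⊤
  | k + 1 => isolator (isolatedDerivedSeries k) ⁅isolatedDerivedSeries k, isolatedDerivedSeries k⁆

variable {G}

instance isolatedDerivedSeries_normal (k : ℕ) : (isolatedDerivedSeries G k).Normal := by
  induction k with
  | zero => exact normal_top
  | succ k _ => exact isolator_normal le_rfl

theorem isTorsionFreeAbelianFactor_isolatedDerivedSeries (k : ℕ) :
    IsTorsionFreeAbelianFactor (isolatedDerivedSeries G k) (isolatedDerivedSeries G (k + 1)) :=
  isTorsionFreeAbelianFactor_isolator le_rfl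

theorem isolatedDerivedSeries_succ_le (k : ℕ) :
    isolatedDerivedSeries G (k + 1) ≤ isolatedDerivedSeries G k :=
  isolator_le_self

theorem IsTorsionFreeAbelianFactor.isolatedDerivedSeries_succ_le {A B : Subgroup G}
    (hBA : IsTorsionFreeAbelianFactor B A) {k : ℕ} (hk : isolatedDerivedSeries G k ≤ B) :
    isolatedDerivedSeries G (k + 1) ≤ A :=
  hBA.isolator_le hk ((commutator_mono hk hk).trans hBA.commutator_le)

theorem PolycyclicSeries.isTorsionFreeAbelianFactor {n : ℕ} (S : PolycyclicSeries G n) (i : Fin n)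
    (hi : Infinite (↥(S.s i.succ) ⧸ (S.s i.castSucc).subgroupOf (S.s i.succ))) :
    IsTorsionFreeAbelianFactor (S.s i.succ) (S.s i.castSucc) := by
  have := S.normal i
  have := S.cyclic i
  have : IsMulTorsionFree (↥(S.s i.succ) ⧸ (S.s i.castSucc).subgroupOf (S.s i.succ)) :=
    Function.Injective.isMulTorsionFree intCyclicMulEquiv.symm.toMonoidHom
      intCyclicMulEquiv.symm.injective
  constructor
  · refine commutator_le.mpr fun x hx y hy => ?_
    have hcomm : ∀ a b : ↥(S.s i.succ) ⧸ (S.s i.castSucc).subgroupOf (S.s i.succ), Commute a b :=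
      fun a b => IsCyclic.commGroup.mul_comm a b
    have h := (commutatorElement_mem_iff_commute (R := (S.s i.castSucc).subgroupOf (S.s i.succ))
      (x := ⟨x, hx⟩) (y := ⟨y, hy⟩)).mpr (hcomm _ _)
    rwa [mem_subgroupOf, ← coe_subtype, map_commutatorElement] at h
  · intro x hx m hm hxm
    have hpow :
        ((⟨x, hx⟩ : S.s i.succ) : _ ⧸ (S.s i.castSucc).subgroupOf (S.s i.succ)) ^ m = 1 ^ m := by
      rw [one_pow, ← QuotientGroup.mk_pow, QuotientGroup.eq_one_iff, mem_subgroupOf]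
      simpa using hxm
    simpa [mem_subgroupOf] using
      (QuotientGroup.eq_one_iff _).mp (IsMulTorsionFree.pow_left_injective hm hpow)

theorem IsStronglyPolycyclic.exists_isolatedDerivedSeries_eq_bot (hG : IsStronglyPolycyclic G) :
    ∃ r, isolatedDerivedSeries G r = ⊥ := by
  obtain ⟨n, S, hS⟩ := hG
  have key : ∀ i : Fin (n + 1), isolatedDerivedSeries G (n - i) ≤ S.s i := by
    intro i
    induction i using Fin.reverseInduction with
    | last => simp [S.top]
    | cast i ih =>
      rw [show n - (i.castSucc : ℕ) = n - (i.succ : ℕ) + 1 by simp; omega]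
      exact (S.isTorsionFreeAbelianFactor i (hS i)).isolatedDerivedSeries_succ_le ih
  exact ⟨n, le_bot_iff.mp (by simpa [S.bot] using key 0)⟩

end IsolatedDerivedSeries

section Refinement

variable {G : Type*} [Group G]

/-- Refines `P ≥ Q` so that `M` centralizes every factor. -/
def refinement (P Q M : Subgroup G) (j : ℕ) : Subgroup G :=
  isolator P (iteratedCommutator P M j ⊔ Q)

variable {P Q M : Subgroup G}

theorem refinement_zero (hQP : Q ≤ P) : refinement P Q M 0 = P :=
  le_antisymm isolator_le_self (le_sup_left.trans (le_isolator (sup_le le_rfl hQP)))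

variable [P.Normal] [M.Normal]

theorem iteratedCommutator_sup_le (hQP : Q ≤ P) (j : ℕ) : iteratedCommutator P M j ⊔ Q ≤ P :=
  sup_le (iteratedCommutator_le_self P M j) hQP

theorem refinement_succ_eq_of_lowerCentralSeries_eq_bot (hPQ : IsTorsionFreeAbelianFactor P Q)
    (hQP : Q ≤ P) {c : ℕ} (hc : M.lowerCentralSeries c = ⊥) : refinement P Q M (c + 1) = Q := by
  have hbot : iteratedCommutator P M (c + 1) = ⊥ :=
    le_bot_iff.mp (hc ▸ iteratedCommutator_succ_le_lowerCentralSeries (commutator_le_right P M) c)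
  refine le_antisymm (hPQ.isolator_le le_rfl (by simp [hbot])) ?_
  exact le_sup_right.trans (le_isolator (iteratedCommutator_sup_le hQP _))

variable [Q.Normal]

theorem refinement_normal (hPQ : IsTorsionFreeAbelianFactor P Q) (j : ℕ) :
    (refinement P Q M j).Normal :=
  isolator_normal (hPQ.commutator_le.trans le_sup_right)

theorem isTorsionFreeAbelianFactor_refinement (hPQ : IsTorsionFreeAbelianFactor P Q) (hQP : Q ≤ P)
    (j : ℕ) : IsTorsionFreeAbelianFactor (refinement P Q M j) (refinement P Q M (j + 1)) where
  commutator_le := (commutator_mono isolator_le_self isolator_le_self).trans <|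
    hPQ.commutator_le.trans <| le_sup_right.trans (le_isolator (iteratedCommutator_sup_le hQP _))
  mem_of_pow_mem x hx :=
    (isTorsionFreeAbelianFactor_isolator (hPQ.commutator_le.trans le_sup_right)).mem_of_pow_mem x
      (isolator_le_self hx)

theorem commutator_refinement_le (hPQ : IsTorsionFreeAbelianFactor P Q) (j : ℕ) :
    ⁅refinement P Q M j, M⁆ ≤ refinement P Q M (j + 1) := by
  have hS : ∀ j, ⁅P, P⁆ ≤ iteratedCommutator P M j ⊔ Q :=
    fun _ => hPQ.commutator_le.trans le_sup_right
  refine commutator_le.mpr fun x hx g hg => ?_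
  obtain ⟨hxP, m, hm, hxm⟩ := (mem_isolator (hS j)).mp hx
  refine (mem_isolator (hS (j + 1))).mpr
    ⟨commutatorElement_mem_left hxP g, m, hm, ?_⟩
  have h1 : ⁅x ^ m, g⁆ ∈ iteratedCommutator P M (j + 1) ⊔ Q :=
    commutator_sup_le le_sup_left ((commutator_le_left Q M).trans le_sup_right)
      (commutator_mem_commutator hxm hg)
  have h2 := QuotientGroup.eq.mp (hPQ.mk_commutatorElement_pow hxP g m)
  have := mul_mem h1 (le_sup_right (a := iteratedCommutator P M (j + 1)) h2)
  rwa [mul_inv_cancel_left] at this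

end Refinement

section RefinedSeries

variable {G : Type*} [Group G]

/-- Term `k * c + j` is the `j`-th step of the refinement of `D k ≥ D (k + 1)`, where `D` is the
isolated derived series. -/
def refinedIsolatedDerivedSeries (M : Subgroup G) (c i : ℕ) : Subgroup G :=
  refinement (isolatedDerivedSeries G (i / c)) (isolatedDerivedSeries G (i / c + 1)) M (i % c)

variable {M : Subgroup G} [M.Normal] {c : ℕ}

theorem refinedIsolatedDerivedSeries_succ (hc : M.lowerCentralSeries c = ⊥) (i : ℕ) :
    refinedIsolatedDerivedSeries M (c + 1) (i + 1) =
      refinement (isolatedDerivedSeries G (i / (c + 1))) (isolatedDerivedSeries G (i / (c + 1) + 1))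
        M (i % (c + 1) + 1) := by
  have hi := Nat.mod_add_div i (c + 1)
  have hlt : i % (c + 1) < c + 1 := Nat.mod_lt i (by omega)
  unfold refinedIsolatedDerivedSeries
  rcases Nat.lt_or_ge (i % (c + 1) + 1) (c + 1) with h | h
  · obtain ⟨hq, hr⟩ := (Nat.div_mod_unique c.succ_pos).mpr
      (⟨by omega, h⟩ : i % (c + 1) + 1 + (c + 1) * (i / (c + 1)) = i + 1 ∧ _)
    rw [hq, hr]
  · -- at the end of a block both sides are the next term of the isolated derived series
    obtain ⟨hq, hr⟩ := (Nat.div_mod_unique c.succ_pos).mpr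
      (⟨by rw [mul_add, mul_one]; omega, c.succ_pos⟩ : 0 + (c + 1) * (i / (c + 1) + 1) = i + 1 ∧ _)
    rw [hq, hr, show i % (c + 1) = c by omega, refinement_zero (isolatedDerivedSeries_succ_le _),
      refinement_succ_eq_of_lowerCentralSeries_eq_bot
        (isTorsionFreeAbelianFactor_isolatedDerivedSeries _) (isolatedDerivedSeries_succ_le _) hc]

theorem IsStronglyPolycyclic.exists_torsionFreeAbelianSeries (hG : IsStronglyPolycyclic G)
    (hM : Group.IsNilpotent M) :
    ∃ (E : ℕ → Subgroup G) (_ : ∀ i, (E i).Normal) (n : ℕ), E 0 = ⊤ ∧ E n = ⊥ ∧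
      ∀ i, IsTorsionFreeAbelianFactor (E i) (E (i + 1)) ∧ ⁅E i, M⁆ ≤ E (i + 1) := by
  obtain ⟨c, hc⟩ := (isNilpotent_iff_lowerCentralSeries M).mp hM
  obtain ⟨r, hr⟩ := hG.exists_isolatedDerivedSeries_eq_bot
  have hD := isTorsionFreeAbelianFactor_isolatedDerivedSeries (G := G)
  refine ⟨refinedIsolatedDerivedSeries M (c + 1),
    fun i => refinement_normal (hD _) _, r * (c + 1), ?_, ?_, fun i => ?_⟩
  · simp only [refinedIsolatedDerivedSeries, Nat.zero_div, Nat.zero_mod]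
    exact refinement_zero (isolatedDerivedSeries_succ_le 0)
  · simp only [refinedIsolatedDerivedSeries, Nat.mul_div_cancel r c.succ_pos, Nat.mul_mod_left]
    rw [refinement_zero (isolatedDerivedSeries_succ_le r), hr]
  · rw [refinedIsolatedDerivedSeries_succ hc]
    exact ⟨isTorsionFreeAbelianFactor_refinement (hD _) (isolatedDerivedSeries_succ_le _) _,
      commutator_refinement_le (hD _) _⟩

end RefinedSeries

theorem IsStronglyPolycyclic.le_fitting_of_finiteIndex_normalizer {G : Type*} [Group G]
    (hG : IsStronglyPolycyclic G) {N : Subgroup G} (hN : Group.IsNilpotent N)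
    [(normalizer (N : Set G)).FiniteIndex] : N ≤ Fitting G := by
  set T := (normalizer (N : Set G)).normalCore
  have hTN : ⁅T, N⁆ ≤ N := le_normalizer_iff_commutator_le_right.mp (normalCore_le _)
  obtain ⟨M, hMn, hMnil, hNM⟩ := exists_normal_isNilpotent_ge_of_finiteIndex (T := T)
    inf_le_right (le_normalizer_iff_commutator_le_right.mpr
      (le_inf ((commutator_mono le_rfl inf_le_left).trans hTN) (commutator_le_left T _)))
    (isNilpotent_of_le inf_le_left hN)
  obtain ⟨E, hE, n, h0, hn, hEM⟩ := hG.exists_torsionFreeAbelianSeries hMnil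
  obtain ⟨a, ha⟩ := exists_iteratedCommutator_eq_bot hTN hN
  refine le_trans (le_seriesStabilizer_iff.mpr fun i => commutator_le.mpr fun x hx g hg => ?_)
    (le_fitting inferInstance (isNilpotent_seriesStabilizer h0 hn))
  -- `g ^ [G : T] ∈ N ⊓ T ≤ M` centralizes each factor, and `g` acts unipotently on `T`.
  refine (hEM i).1.commutatorElement_mem (n := a) (FiniteIndex.index_ne_zero (H := T))
    (fun y hy => ?_) (fun y _ => ?_) x hx
  · exact commutator_le.mp (hEM i).2 y hy _ (hNM ⟨pow_mem hg _, T.pow_index_mem g⟩)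
  · have := iterate_commutatorElement_mem_iteratedCommutator hg (T.pow_index_mem y) a
    rw [ha a le_rfl, mem_bot] at this
    exact this ▸ one_mem _

theorem IsStronglyPolycyclic.map_subtype_fitting_le {G : Type*} [Group G]
    (hG : IsStronglyPolycyclic G) (H : Subgroup G) [H.FiniteIndex] :
    (Fitting H).map H.subtype ≤ Fitting G := by
  simp only [Fitting, Subgroup.map_iSup]
  refine iSup₂_le fun N ⟨hN, hnil⟩ => ?_
  have hH : H ≤ normalizer (N.map H.subtype : Set G) := by
    have := le_normalizer_map H.subtype (H := N)
    rwa [normalizer_eq_top_iff.mpr hN, ← MonoidHom.range_eq_map, range_subtype] at this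
  have := finiteIndex_of_le hH
  exact hG.le_fitting_of_finiteIndex_normalizer
    ((Group.isNilpotent_congr (N.equivMapOfInjective _ H.subtype_injective)).mp hnil)

theorem fitting_inf_le_map_subtype_fitting {G : Type*} [Group G] (H : Subgroup G) :
    Fitting G ⊓ H ≤ (Fitting H).map H.subtype := by
  rintro x ⟨hx, hxH⟩
  obtain ⟨N, hN, hnil, hxN⟩ := mem_fitting_iff.mp hx
  have hnilH : Group.IsNilpotent (N.subgroupOf H) := by
    refine (Group.isNilpotent_congr (equivMapOfInjective _ _ H.subtype_injective)).mpr ?_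
    rw [subgroupOf_map_subtype]
    exact isNilpotent_of_le inf_le_left hnil
  exact ⟨⟨x, hxH⟩, le_fitting (hN.subgroupOf H) hnilH hxN, rfl⟩

/-- If `Γ` is strongly polycyclic and `Γ₁ ≤ Γ` has finite index, then
`Fitt(Γ₁) = Fitt(Γ) ∩ Γ₁`. -/
theorem fitting_of_finiteIndex (Γ : Type*) [Group Γ]
    (hΓ : IsStronglyPolycyclic Γ) (Γ₁ : Subgroup Γ) (hΓ₁ : Γ₁.FiniteIndex) :
    Subgroup.map Γ₁.subtype (Fitting ↥Γ₁) = Fitting Γ ⊓ Γ₁ :=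
  le_antisymm (le_inf (hΓ.map_subtype_fitting_le Γ₁) (map_subtype_le _))
    (fitting_inf_le_map_subtype_fitting Γ₁)
end

section
/- Let P be a group acting linearly on a finite-dimensional real vector space V, preserving a lattice L' ⊆ V (a finitely generated ℤ-submodule spanning V), with the action on V irreducible and nontrivial. Then the set of v ∈ V such that v − p·v ∈ L' for all p ∈ P is contained in a lattice L ⊆ V; equivalently, the fixed-point set of the induced P-action on the torus V/L' is finite. -/
/-!
The vectors fixed by all of `P` form an invariant subspace, which is `0` by irreducibility and
nontriviality. As `V` is Artinian, finitely many `p₁, …, pₙ` already have no common fixed vector,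
so `v ↦ (v - pᵢ • v)ᵢ` is injective. It embeds `{v | ∀ p, v - p • v ∈ L'}` into `L'ⁿ`, so this
group is finitely generated; together with `L'` it generates the required lattice.
-/

open Function

theorem Submodule.fg_comap_of_injective {R M N : Type*} [CommRing R] [IsNoetherianRing R]
    [AddCommGroup M] [Module R M] [AddCommGroup N] [Module R N] {f : M →ₗ[R] N}
    (hf : Injective f) {L : Submodule R N} (hL : L.FG) : (L.comap f).FG :=
  fg_of_fg_map_of_fg_inf_ker f (hL.of_le (map_comap_le f L)) (by
    rw [LinearMap.ker_eq_bot.mpr hf, inf_bot_eq]; exact fg_bot)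

theorem iInf_ker_one_sub_eq_bot {R V ι : Type*} [Ring R] [AddCommGroup V] [Module R V]
    (f : ι → V →ₗ[R] V)
    (hirr : ∀ W : Submodule R V, (∀ i, ∀ x ∈ W, f i x ∈ W) → W = ⊥ ∨ W = ⊤)
    (hnontriv : ∃ i x, f i x ≠ x) :
    ⨅ i, LinearMap.ker (1 - f i) = ⊥ := by
  have mem_fix (x : V) : x ∈ ⨅ i, LinearMap.ker (1 - f i) ↔ ∀ i, f i x = x := by
    simp [Submodule.mem_iInf, sub_eq_zero, eq_comm (a := x)]
  refine (hirr _ fun i x hx => (mem_fix _).2 fun j => ?_).resolve_right fun htop => ?_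
  · rw [(mem_fix x).1 hx i, (mem_fix x).1 hx j]
  · obtain ⟨i, x, hx⟩ := hnontriv
    exact hx ((mem_fix x).1 (htop ▸ Submodule.mem_top) i)

theorem exists_finset_injective_of_iInf_ker_eq_bot {R V W ι : Type*} [Ring R] [AddCommGroup V]
    [Module R V] [IsArtinian R V] [AddCommGroup W] [Module R W] (g : ι → V →ₗ[R] W)
    (hg : ⨅ i, LinearMap.ker (g i) = ⊥) :
    ∃ s : Finset ι, Injective fun v (i : s) => g i v := by
  obtain ⟨s, hs⟩ := Finset.exists_inf_eq_iInf fun i => LinearMap.ker (g i)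
  refine ⟨s, (LinearMap.pi fun i : s => g i).ker_eq_bot.mp ?_⟩
  rw [LinearMap.ker_pi, ← hg, ← hs, Finset.inf_eq_iInf, iInf_subtype]

theorem Submodule.fg_iInf_comap {R V W ι : Type*} [CommRing R] [IsNoetherianRing R]
    [AddCommGroup V] [Module R V] [AddCommGroup W] [Module R W] (g : ι → V →ₗ[R] W)
    {s : Finset ι} (hs : Injective fun v (i : s) => g i v) {L : Submodule R W} (hL : L.FG) :
    (⨅ i, L.comap (g i)).FG := by
  have hfg : ((pi Set.univ fun _ : s => L).comap (LinearMap.pi fun i : s => g i)).FG :=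
    fg_comap_of_injective hs (fg_pi fun _ => hL)
  exact hfg.of_le fun v hv i _ => mem_iInf _ |>.1 hv i

theorem lattice_fixed_points_general (P : Type*) [Group P]
    (V : Type*) [AddCommGroup V] [Module ℝ V] [FiniteDimensional ℝ V]
    (ρ : P →* (V ≃ₗ[ℝ] V))
    (L' : AddSubgroup V) (hfg : L'.FG)
    (hspan : Submodule.span ℝ (L' : Set V) = ⊤)
    (hirr : ∀ W : Submodule ℝ V, (∀ (p : P), ∀ x ∈ W, ρ p x ∈ W) → W = ⊥ ∨ W = ⊤)
    (hnontriv : ∃ (p : P) (x : V), ρ p x ≠ x) :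
    ∃ L : AddSubgroup V, L.FG ∧ Submodule.span ℝ (L : Set V) = ⊤ ∧
      ∀ v : V, (∀ p : P, v - ρ p v ∈ L') → v ∈ L := by
  let g (p : P) : V →ₗ[ℝ] V := 1 - (ρ p).toLinearMap
  obtain ⟨s, hs⟩ := exists_finset_injective_of_iInf_ker_eq_bot g
    (iInf_ker_one_sub_eq_bot _ hirr hnontriv)
  have hL' : L'.toIntSubmodule.FG := by
    rwa [Submodule.fg_iff_addSubgroup_fg, AddSubgroup.toIntSubmodule_toAddSubgroup]
  let F : Submodule ℤ V := ⨅ p, L'.toIntSubmodule.comap ((g p).restrictScalars ℤ)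
  have hF : F.FG := Submodule.fg_iInf_comap (fun p => (g p).restrictScalars ℤ) hs hL'
  refine ⟨(L'.toIntSubmodule ⊔ F).toAddSubgroup,
    (Submodule.fg_iff_addSubgroup_fg _).1 (hL'.sup hF),
    top_le_iff.1 (hspan ▸ Submodule.span_mono fun x hx => ?_), fun v hv => ?_⟩
  · exact Submodule.mem_sup_left (S := L'.toIntSubmodule) hx
  · exact Submodule.mem_sup_right (Submodule.mem_iInf _ |>.2 hv)

/-- Let `P` act linearly, irreducibly and nontrivially on a finite-dimensional
real vector space `V`, preserving a vector space lattice `L'` (a finitely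
generated `ℤ`-submodule spanning `V`).  Then every `v ∈ V` with `v - p • v ∈ L'`
for all `p ∈ P` lies in a fixed vector space lattice `L`. -/
theorem lattice_fixed_points (P : Type*) [Group P]
    (V : Type*) [AddCommGroup V] [Module ℝ V] [FiniteDimensional ℝ V]
    (ρ : P →* (V ≃ₗ[ℝ] V))
    (L' : AddSubgroup V) (hfg : L'.FG)
    (hspan : Submodule.span ℝ (L' : Set V) = ⊤)
    (hpres : ∀ (p : P), ∀ x ∈ L', ρ p x ∈ L')
    (hirr : ∀ W : Submodule ℝ V, (∀ (p : P), ∀ x ∈ W, ρ p x ∈ W) → W = ⊥ ∨ W = ⊤)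
    (hnontriv : ∃ (p : P) (x : V), ρ p x ≠ x) :
    ∃ L : AddSubgroup V, L.FG ∧ Submodule.span ℝ (L : Set V) = ⊤ ∧
      ∀ v : V, (∀ p : P, v - ρ p v ∈ L') → v ∈ L :=
  lattice_fixed_points_general P V ρ L' hfg hspan hirr hnontriv
end
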